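/- For every β ∈ (0,1/2] and ε ∈ (0,1) there exist K = K(ε) and d₀ = d₀(β,ε) such that for all integers d₁, d₂ ≥ d₀ that are multiples of K and satisfy 1 ≥ d₁/d₂ ≥ β/(1−β), there exist μ = μ(β,ε,d₁,d₂) > 0 such that for every N ∈ ℕ there is a finite (d₁,d₂)-biregular bipartite graph Z with |V(Z)| ≥ N in which every nonempty S ⊆ L(Z) with |S| ≤ μ|L(Z)| satisfies |N_Z(S)| ≥ (1−ε)·d₁·|S|. -/

import Mathlib

open scoped Classical

noncomputable section

namespace UNE

/-- The set of neighbors of a vertex set `S`. -/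
def nbrSet {V : Type*} (G : SimpleGraph V) (S : Set V) : Set V :=
  {v | ∃ u ∈ S, G.Adj v u}

/-- The set of unique-neighbors of `S`: vertices with exactly one neighbor in `S`. -/
def uniqueNbrs {V : Type*} (G : SimpleGraph V) (S : Set V) : Set V :=
  {v | ∃! u, u ∈ S ∧ G.Adj v u}

/-- Degree of a vertex. -/
def deg {V : Type*} (G : SimpleGraph V) (v : V) : ℕ :=
  {u | G.Adj v u}.ncard

/-- `L, R` is a bipartition of `G`. -/
structure IsBipartition {V : Type*} (G : SimpleGraph V) (L R : Set V) : Prop where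
  disj : Disjoint L R
  cover : L ∪ R = Set.univ
  cross : ∀ ⦃u v⦄, G.Adj u v → (u ∈ L ∧ v ∈ R) ∨ (u ∈ R ∧ v ∈ L)

/-- `G` is `(c,d)`-biregular with parts `L` and `R`. -/
structure IsBiregular {V : Type*} (G : SimpleGraph V) (L R : Set V) (c d : ℕ)
    extends IsBipartition G L R : Prop where
  degL : ∀ v ∈ L, deg G v = c
  degR : ∀ v ∈ R, deg G v = d

/-- Adjacency matrix over ℝ. -/
def adjMat {V : Type*} (G : SimpleGraph V) : Matrix V V ℝ :=
  Matrix.of fun u v => if G.Adj u v then (1 : ℝ) else 0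

/-- Diagonal degree matrix. -/
def degMat {V : Type*} (G : SimpleGraph V) : Matrix V V ℝ :=
  Matrix.diagonal fun v => (deg G v : ℝ)

/-- Bethe Hessian `H_G(t) = (D - I) t² - t A + I`. -/
def betheHessian {V : Type*} (G : SimpleGraph V) (t : ℝ) : Matrix V V ℝ :=
  t ^ 2 • (degMat G - 1) - t • adjMat G + 1

/-- The second largest eigenvalue (with multiplicity) of a square real matrix,
read off from the multiset of real roots of its characteristic polynomial. -/
def secondEig {V : Type*} [Fintype V] (A : Matrix V V ℝ) : ℝ :=
  (A.charpoly.roots.sort (· ≤ ·)).getD ((A.charpoly.roots.sort (· ≤ ·)).length - 2) 0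

/-- Orientations of edges of `G`. -/
def Orient {V : Type*} (G : SimpleGraph V) : Type _ := {p : V × V // G.Adj p.1 p.2}

/-- The non-backtracking matrix of `G`. -/
def nonBacktracking {V : Type*} (G : SimpleGraph V) : Matrix (Orient G) (Orient G) ℝ :=
  Matrix.of fun e f => if e.1.2 = f.1.1 ∧ e.1.1 ≠ f.1.2 then (1 : ℝ) else 0

/-- Spectral radius: largest absolute value of a complex eigenvalue. -/
def specRad {n : Type*} [Fintype n] (A : Matrix n n ℝ) : ℝ :=
  (((A.map fun x => (x : ℂ)).charpoly.roots.map fun z => ‖z‖).toList.foldr max 0)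

/-- `G` contains a bicycle (connected subgraph with one more edge than vertices)
on at most `ℓ` vertices. -/
def HasBicycle {V : Type*} (G : SimpleGraph V) (ℓ : ℝ) : Prop :=
  ∃ H : G.Subgraph, H.Connected ∧ H.edgeSet.ncard = H.verts.ncard + 1 ∧ (H.verts.ncard : ℝ) ≤ ℓ

/-- `G` contains a cycle of length at most `ℓ`. -/
def HasCycleLe {V : Type*} (G : SimpleGraph V) (ℓ : ℝ) : Prop :=
  ∃ (v : V) (w : G.Walk v v), w.IsCycle ∧ (w.length : ℝ) ≤ ℓ

/-- Number of edges of `G` with both endpoints in `S`. -/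
def eInside {V : Type*} (G : SimpleGraph V) (S : Set V) : ℕ :=
  {e ∈ G.edgeSet | ∀ v ∈ e, v ∈ S}.ncard

/-- Number of edges of `G` with one endpoint in `S` and the other in `T`. -/
def eBetween {V : Type*} (G : SimpleGraph V) (S T : Set V) : ℕ :=
  {e ∈ G.edgeSet | ∃ u ∈ S, ∃ v ∈ T, e = s(u, v)}.ncard

/-- Unique-neighbor expansion profile `P_H(t)`. -/
def profile {V : Type*} (H : SimpleGraph V) (t : ℝ) : ℝ :=
  sInf {r | ∃ S : Set V, S.Nonempty ∧ (S.ncard : ℝ) ≤ t ∧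
    r = ((uniqueNbrs H S).ncard : ℝ) / (S.ncard : ℝ)}



/-! Take for `Z` an `n`-lift of the complete bipartite graph `K_{d₂,d₁}`: every edge `uv` of
`K_{d₂,d₁}` becomes a perfect matching, given by a permutation of `Fin n`, between the fibres over
`u` and `v`, so every lift is `(d₁,d₂)`-biregular. A set `S` of `s` left vertices with fewer than
`(1 - ε) d₁ s` neighbours has its neighbourhood inside some set `T` of `t = ⌊(1 - ε) d₁ s⌋` right
vertices. For fixed `S` and `T` this happens for at most a fraction `(2t/n)^{d₁ s}` of the lifts,
and the union bound over `S` and `T` costs only `binom(d₂ n, s) binom(d₁ n, t)`. Since at least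
`ε d₁ s ≥ 2s` neighbours are missing, the total is at most `4⁻ˢ` as long as `s ≤ n / D` for a
constant `D = D(d₁, d₂)`; summing over `s` leaves a lift in which every small set expands. -/

open Finset Nat

section PermCount

variable {α : Type*} [Fintype α] [DecidableEq α]

theorem card_perm_fixing (A : Finset α) :
    #{π : Equiv.Perm α | ∀ i ∈ A, π i = i} = (Fintype.card α - #A)! :=
  calc #{π : Equiv.Perm α | ∀ i ∈ A, π i = i}
      = Fintype.card {π : Equiv.Perm α // ∀ i, ¬i ∉ A → π i = i} := by
        rw [Fintype.card_subtype]; simp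
    _ = Fintype.card (Equiv.Perm {i // i ∉ A}) :=
        (Fintype.card_congr (Equiv.Perm.subtypeEquivSubtypePerm _)).symm
    _ = (Fintype.card α - #A)! := by
        rw [Fintype.card_perm, Fintype.card_subtype_compl, Fintype.card_coe]

theorem card_perm_mapsTo_le (A B : Finset α) :
    #{π : Equiv.Perm α | ∀ i ∈ A, π i ∈ B} ≤ #B ^ #A * (Fintype.card α - #A)! := by
  set P : Finset (Equiv.Perm α) := {π | ∀ i ∈ A, π i ∈ B}
  let restrict (π : Equiv.Perm α) (i : A) : α := π i
  -- a fibre of `restrict` is a coset of the pointwise stabiliser of `A`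
  have hfiber : ∀ f ∈ P.image restrict, #{π ∈ P | restrict π = f} ≤ (Fintype.card α - #A)! := by
    intro f hf
    obtain ⟨π₀, -, rfl⟩ := mem_image.mp hf
    rw [← card_perm_fixing A]
    refine card_le_card_of_injOn (π₀⁻¹ * ·) (fun π hπ => ?_) (fun π _ σ _ h => mul_left_cancel h)
    simp only [coe_filter, Set.mem_ofPred_eq, mem_univ, true_and] at hπ ⊢
    intro i hi
    have hπi : π i = π₀ i := congrFun hπ.2 ⟨i, hi⟩
    simp [hπi]
  have himage : P.image restrict ⊆ Fintype.piFinset fun _ : A => B := by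
    intro f hf
    obtain ⟨π, hπ, rfl⟩ := mem_image.mp hf
    simp only [Fintype.mem_piFinset]
    exact fun i => (mem_filter.mp hπ).2 i i.2
  calc #P ≤ (Fintype.card α - #A)! * #(P.image restrict) := card_le_mul_card_image P _ hfiber
    _ ≤ (Fintype.card α - #A)! * #B ^ #A := by
      gcongr
      simpa using card_le_card himage
    _ = #B ^ #A * (Fintype.card α - #A)! := mul_comm _ _

theorem factorial_sub_mul_pow_le {n a : ℕ} (h : 2 * a ≤ n) : (n - a)! * n ^ a ≤ 2 ^ a * n ! := by
  have hpow : n ^ a ≤ 2 ^ a * n.descFactorial a :=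
    calc n ^ a ≤ (2 * (n + 1 - a)) ^ a := Nat.pow_le_pow_left (by omega) a
      _ = 2 ^ a * (n + 1 - a) ^ a := Nat.mul_pow ..
      _ ≤ 2 ^ a * n.descFactorial a := by gcongr; exact n.pow_sub_le_descFactorial a
  calc (n - a)! * n ^ a ≤ (n - a)! * (2 ^ a * n.descFactorial a) := by gcongr
    _ = 2 ^ a * n ! := by rw [← factorial_mul_descFactorial (by omega : a ≤ n)]; ring

theorem card_perm_mapsTo_mul_pow_le (A B : Finset α) (h : 2 * #A ≤ Fintype.card α) :
    #{π : Equiv.Perm α | ∀ i ∈ A, π i ∈ B} * Fintype.card α ^ #A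
      ≤ (2 * #B) ^ #A * (Fintype.card α)! :=
  calc #{π : Equiv.Perm α | ∀ i ∈ A, π i ∈ B} * Fintype.card α ^ #A
      ≤ #B ^ #A * ((Fintype.card α - #A)! * Fintype.card α ^ #A) := by
        rw [← mul_assoc]; gcongr; exact card_perm_mapsTo_le A B
    _ ≤ #B ^ #A * (2 ^ #A * (Fintype.card α)!) :=
        Nat.mul_le_mul_left _ (factorial_sub_mul_pow_le h)
    _ = (2 * #B) ^ #A * (Fintype.card α)! := by ring

end PermCount

theorem choose_mul_pow_self_le (m t : ℕ) : m.choose t * t ^ t ≤ (3 * m) ^ t := by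
  -- `t ^ t / t! ≤ exp t < 3 ^ t`
  have hexp : (t : ℝ) ^ t / t ! ≤ 3 ^ t := by
    refine (Real.pow_div_factorial_le_exp _ (by positivity) t).trans ?_
    rw [← Real.exp_one_pow]
    gcongr
    exact Real.exp_one_lt_three.le
  have : (m.choose t * t ^ t : ℝ) ≤ (3 * m) ^ t :=
    calc (m.choose t * t ^ t : ℝ) ≤ m ^ t / t ! * t ^ t := by
          gcongr; exact Nat.choose_le_pow_div t m
      _ = m ^ t * (t ^ t / t !) := by ring
      _ ≤ m ^ t * 3 ^ t := by gcongr
      _ = (3 * m) ^ t := by ring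
  exact_mod_cast this

theorem choose_mul_choose_mul_pow_le {c d n s t : ℕ} (hd : 0 < d) (hts : t + 2 * s ≤ c * s)
    (hsn : 12 * d * (6 * c) ^ c * s ≤ n) :
    (d * n).choose s * (c * n).choose t * (2 * t) ^ (c * s) * 4 ^ s ≤ n ^ (c * s) := by
  set D := 12 * d * (6 * c) ^ c with hD_def
  have hD : 1 ≤ D := Nat.one_le_iff_ne_zero.mpr (by simp [D]; omega)
  -- the `j ≥ s` surplus missing neighbours pay for the factor `(n / s) ^ s` from choosing `S`
  obtain ⟨j, hcs, hsj⟩ : ∃ j, c * s = t + s + j ∧ s ≤ j := ⟨c * s - t - s, by omega, by omega⟩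
  have h6c : (3 * c) ^ t * (2 ^ (t + s + j) * c ^ (s + j)) ≤ ((6 * c) ^ c) ^ s :=
    calc (3 * c) ^ t * (2 ^ (t + s + j) * c ^ (s + j))
        ≤ (3 * c) ^ t * (2 ^ (t + s + j) * (3 * c) ^ (s + j)) := by gcongr; omega
      _ = 2 ^ (c * s) * (3 * c) ^ (c * s) := by rw [hcs]; ring
      _ = ((6 * c) ^ c) ^ s := by rw [← mul_pow, ← pow_mul]; ring
  have hDs : D ^ s * s ^ j ≤ n ^ j :=
    calc D ^ s * s ^ j ≤ D ^ j * s ^ j := by gcongr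
      _ = (D * s) ^ j := (mul_pow _ _ _).symm
      _ ≤ n ^ j := by gcongr
  refine Nat.le_of_mul_le_mul_right ?_ (Nat.pow_self_pos : 0 < s ^ s)
  rw [hcs]
  calc (d * n).choose s * (c * n).choose t * (2 * t) ^ (t + s + j) * 4 ^ s * s ^ s
      = ((d * n).choose s * s ^ s) * ((c * n).choose t * t ^ t)
          * (2 ^ (t + s + j) * t ^ (s + j) * 4 ^ s) := by ring
    _ ≤ (3 * (d * n)) ^ s * (3 * (c * n)) ^ t * (2 ^ (t + s + j) * (c * s) ^ (s + j) * 4 ^ s) := by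
        gcongr
        · exact choose_mul_pow_self_le _ _
        · exact choose_mul_pow_self_le _ _
        · omega
    _ = n ^ (t + s) * (s ^ s * s ^ j)
          * ((3 * d) ^ s * 4 ^ s * ((3 * c) ^ t * (2 ^ (t + s + j) * c ^ (s + j)))) := by
        ring
    _ ≤ n ^ (t + s) * (s ^ s * s ^ j) * ((3 * d) ^ s * 4 ^ s * ((6 * c) ^ c) ^ s) := by gcongr
    _ = n ^ (t + s) * s ^ s * (D ^ s * s ^ j) := by
        rw [← mul_pow, ← mul_pow, hD_def]; ring
    _ ≤ n ^ (t + s) * s ^ s * n ^ j := by gcongr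
    _ = n ^ (t + s + j) * s ^ s := by ring

theorem exists_forall_notMem_of_card_mul_four_pow_le {Ω : Type*} [Fintype Ω]
    (Bad : ℕ → Finset Ω) (M : ℕ) (hΩ : 0 < Fintype.card Ω)
    (h : ∀ s ∈ Icc 1 M, #(Bad s) * 4 ^ s ≤ Fintype.card Ω) :
    ∃ ω, ∀ s ∈ Icc 1 M, ω ∉ Bad s := by
  have hsum : ∑ s ∈ Icc 1 M, #(Bad s) < Fintype.card Ω := by
    have hgeom := geom_sum_Ico_le_of_lt_one (m := 1) (n := M + 1)
      (by norm_num : (0 : ℝ) ≤ 1 / 4) (by norm_num)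
    rw [Finset.Ico_add_one_right_eq_Icc] at hgeom
    have hΩ' : (0 : ℝ) < Fintype.card Ω := by exact_mod_cast hΩ
    suffices (∑ s ∈ Icc 1 M, #(Bad s) : ℝ) < Fintype.card Ω by exact_mod_cast this
    calc (∑ s ∈ Icc 1 M, #(Bad s) : ℝ)
        ≤ ∑ s ∈ Icc 1 M, Fintype.card Ω * (1 / 4 : ℝ) ^ s := by
          refine sum_le_sum fun s hs => ?_
          rw [one_div_pow, mul_one_div, le_div_iff₀ (by positivity)]
          exact_mod_cast h s hs
      _ = Fintype.card Ω * ∑ s ∈ Icc 1 M, (1 / 4 : ℝ) ^ s := (mul_sum ..).symm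
      _ ≤ Fintype.card Ω * ((1 / 4) ^ 1 / (1 - 1 / 4)) := by gcongr
      _ < Fintype.card Ω := by linarith
  obtain ⟨ω, -, hω⟩ := exists_mem_notMem_of_card_lt_card (s := (Icc 1 M).biUnion Bad)
    (t := univ) (card_biUnion_le.trans_lt (by simpa using hsum))
  exact ⟨ω, fun s hs hmem => hω (mem_biUnion.2 ⟨s, hs, hmem⟩)⟩

section BipartiteOfRel

variable {α β : Type*} (r : α → β → Prop)

def bipartiteOfRel : SimpleGraph (α ⊕ β) where
  Adj
    | .inl a, .inr b => r a b
    | .inr b, .inl a => r a b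
    | _, _ => False
  symm := ⟨by rintro (a | b) (a' | b') h <;> exact h⟩
  loopless := ⟨by rintro (a | b) h <;> exact h⟩

@[simp] theorem bipartiteOfRel_adj_inl_inr {a : α} {b : β} :
    (bipartiteOfRel r).Adj (.inl a) (.inr b) ↔ r a b := Iff.rfl

@[simp] theorem bipartiteOfRel_adj_inr_inl {a : α} {b : β} :
    (bipartiteOfRel r).Adj (.inr b) (.inl a) ↔ r a b := Iff.rfl

@[simp] theorem not_bipartiteOfRel_adj_inl_inl {a a' : α} :
    ¬(bipartiteOfRel r).Adj (.inl a) (.inl a') := id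

@[simp] theorem not_bipartiteOfRel_adj_inr_inr {b b' : β} :
    ¬(bipartiteOfRel r).Adj (.inr b) (.inr b') := id

theorem deg_bipartiteOfRel_inl (a : α) :
    deg (bipartiteOfRel r) (.inl a) = {b | r a b}.ncard := by
  have : {y | (bipartiteOfRel r).Adj (.inl a) y} = Sum.inr '' {b | r a b} := by
    ext (a' | b) <;> simp
  rw [deg, this, Set.ncard_image_of_injective _ Sum.inr_injective]

theorem deg_bipartiteOfRel_inr (b : β) :
    deg (bipartiteOfRel r) (.inr b) = {a | r a b}.ncard := by
  have : {y | (bipartiteOfRel r).Adj (.inr b) y} = Sum.inl '' {a | r a b} := by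
    ext (a | b') <;> simp
  rw [deg, this, Set.ncard_image_of_injective _ Sum.inl_injective]

theorem nbrSet_bipartiteOfRel_image_inl (S : Set α) :
    nbrSet (bipartiteOfRel r) (Sum.inl '' S) = Sum.inr '' {b | ∃ a ∈ S, r a b} := by
  ext (a | b) <;> simp [nbrSet]

theorem isBiregular_bipartiteOfRel {c d : ℕ} (hl : ∀ a, {b | r a b}.ncard = c)
    (hr : ∀ b, {a | r a b}.ncard = d) :
    IsBiregular (bipartiteOfRel r) (Set.range Sum.inl) (Set.range Sum.inr) c d where
  disj := Set.isCompl_range_inl_range_inr.disjoint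
  cover := Set.range_inl_union_range_inr
  cross := by rintro (a | b) (a' | b') h <;> simp_all
  degL := by rintro _ ⟨a, rfl⟩; rw [deg_bipartiteOfRel_inl, hl]
  degR := by rintro _ ⟨b, rfl⟩; rw [deg_bipartiteOfRel_inr, hr]

end BipartiteOfRel

def IsLeftExpander {V : Type*} (G : SimpleGraph V) (L : Set V) (μ δ : ℝ) : Prop :=
  ∀ S ⊆ L, S.Nonempty → (S.ncard : ℝ) ≤ μ * L.ncard → δ * S.ncard ≤ (nbrSet G S).ncard

theorem isLeftExpander_bipartiteOfRel {α β : Type*} {r : α → β → Prop} {μ δ : ℝ}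
    (h : ∀ S : Set α, S.Nonempty → (S.ncard : ℝ) ≤ μ * Nat.card α →
      δ * S.ncard ≤ {b | ∃ a ∈ S, r a b}.ncard) :
    IsLeftExpander (bipartiteOfRel r) (Set.range Sum.inl) μ δ := by
  intro S hS hne hsize
  obtain ⟨S, rfl⟩ : ∃ S' : Set α, Sum.inl '' S' = S :=
    ⟨Sum.inl ⁻¹' S, Set.image_preimage_eq_of_subset hS⟩
  rw [Set.ncard_image_of_injective _ Sum.inl_injective,
    Set.ncard_range_of_injective Sum.inl_injective] at hsize
  rw [nbrSet_bipartiteOfRel_image_inl, Set.ncard_image_of_injective _ Sum.inr_injective,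
    Set.ncard_image_of_injective _ Sum.inl_injective]
  exact h S (Set.image_nonempty.mp hne) hsize

section Transport

variable {V W : Type*} (e : V ≃ W) {G : SimpleGraph V}

theorem deg_comap_symm (v : V) : deg (G.comap e.symm) (e v) = deg G v := by
  have : {w | (G.comap e.symm).Adj (e v) w} = e '' {u | G.Adj v u} := by
    ext w; simp [e.image_eq_preimage_symm]
  rw [deg, this, Set.ncard_image_of_injective _ e.injective, deg]

theorem nbrSet_comap_symm (S : Set V) :
    nbrSet (G.comap e.symm) (e '' S) = e '' nbrSet G S := by
  ext w
  simp only [nbrSet, e.image_eq_preimage_symm, Set.mem_preimage, Set.mem_ofPred_eq,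
    SimpleGraph.comap_adj]
  exact (e.symm.surjective.exists (p := fun u => u ∈ S ∧ G.Adj (e.symm w) u)).symm

theorem IsBiregular.comap_symm {L R : Set V} {c d : ℕ} (h : IsBiregular G L R c d) :
    IsBiregular (G.comap e.symm) (e '' L) (e '' R) c d where
  disj := (Set.disjoint_image_iff e.injective).mpr h.disj
  cover := by rw [← Set.image_union, h.cover, Set.image_univ, e.range_eq_univ]
  cross u v huv := by simpa [e.image_eq_preimage_symm] using h.cross huv
  degL := by rintro _ ⟨v, hv, rfl⟩; rw [deg_comap_symm, h.degL v hv]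
  degR := by rintro _ ⟨v, hv, rfl⟩; rw [deg_comap_symm, h.degR v hv]

theorem IsLeftExpander.comap_symm {L : Set V} {μ δ : ℝ} (h : IsLeftExpander G L μ δ) :
    IsLeftExpander (G.comap e.symm) (e '' L) μ δ := by
  intro S hS hne hsize
  rw [← e.image_symm_image S] at hS hne hsize ⊢
  rw [Set.ncard_image_of_injective _ e.injective, Set.ncard_image_of_injective _ e.injective]
    at hsize
  rw [nbrSet_comap_symm, Set.ncard_image_of_injective _ e.injective,
    Set.ncard_image_of_injective _ e.injective]
  exact h _ ((Set.image_subset_image_iff e.injective).mp hS) (Set.image_nonempty.mp hne) hsize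

end Transport

section Lift

variable {c d n : ℕ}

/-- `bipartiteOfRel (liftRel ω)` is the `n`-lift of `K_{d,c}` in which the edge `(u, v)` becomes
the matching `(u, i) ~ (v, ω (u, v) i)`. -/
def liftRel (ω : Fin d × Fin c → Equiv.Perm (Fin n)) (x : Fin d × Fin n) (y : Fin c × Fin n) :
    Prop :=
  ω (x.1, y.1) x.2 = y.2

def LiftMapsTo (ω : Fin d × Fin c → Equiv.Perm (Fin n)) (S : Finset (Fin d × Fin n))
    (T : Finset (Fin c × Fin n)) : Prop :=
  ∀ p i, (p.1, i) ∈ S → (p.2, ω p i) ∈ T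

theorem isBiregular_lift (ω : Fin d × Fin c → Equiv.Perm (Fin n)) :
    IsBiregular (bipartiteOfRel (liftRel ω)) (Set.range Sum.inl) (Set.range Sum.inr) c d := by
  refine isBiregular_bipartiteOfRel _ (fun x => ?_) (fun y => ?_)
  · have : {y | liftRel ω x y} = Set.range fun v => (v, ω (x.1, v) x.2) := by
      ext ⟨v, j⟩; simp [liftRel, eq_comm]
    rw [this, Set.ncard_range_of_injective fun v v' h => congrArg Prod.fst h, Nat.card_fin]
  · have : {x | liftRel ω x y} = Set.range fun u => (u, (ω (u, y.1)).symm y.2) := by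
      ext ⟨u, i⟩; simp [liftRel, Equiv.eq_symm_apply, eq_comm]
    rw [this, Set.ncard_range_of_injective fun u u' h => congrArg Prod.fst h, Nat.card_fin]

theorem card_liftMapsTo_mul_pow_le (S : Finset (Fin d × Fin n)) (T : Finset (Fin c × Fin n))
    (h : 2 * #S ≤ n) :
    #{ω | LiftMapsTo ω S T} * n ^ (c * #S) ≤ (2 * #T) ^ (c * #S) * n ! ^ (d * c) := by
  set A : Fin d → Finset (Fin n) := fun u => {i | (u, i) ∈ S}
  set B : Fin c → Finset (Fin n) := fun v => {j | (v, j) ∈ T}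
  have hpi : ({ω | LiftMapsTo ω S T} : Finset (Fin d × Fin c → Equiv.Perm (Fin n)))
      = Fintype.piFinset fun p => {π | ∀ i ∈ A p.1, π i ∈ B p.2} := by
    ext ω; simp [LiftMapsTo, A, B, Fintype.mem_piFinset]
  have hA : ∑ u, #(A u) = #S :=
    calc ∑ u, #(A u) = ∑ u, ∑ i, if (u, i) ∈ S then 1 else 0 := by simp only [A, card_filter]
      _ = ∑ x : Fin d × Fin n, if x ∈ S then 1 else 0 := (Fintype.sum_prod_type' ..).symm
      _ = #S := by simp
  have hAS : ∀ u, #(A u) ≤ #S := fun u =>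
    card_le_card_of_injOn (fun i => (u, i)) (by simp [A, Set.MapsTo]) (by simp [Set.InjOn])
  have hBT : ∀ v, #(B v) ≤ #T := fun v =>
    card_le_card_of_injOn (fun j => (v, j)) (by simp [B, Set.MapsTo]) (by simp [Set.InjOn])
  have hsum : ∑ p : Fin d × Fin c, #(A p.1) = c * #S := by
    rw [Fintype.sum_prod_type]; simp [← mul_sum, hA]
  calc _ = ∏ p : Fin d × Fin c, (#{π : Equiv.Perm (Fin n) | ∀ i ∈ A p.1, π i ∈ B p.2}
          * n ^ #(A p.1)) := by
        rw [hpi, Fintype.card_piFinset, prod_mul_distrib, prod_pow_eq_pow_sum, hsum]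
    _ ≤ ∏ p : Fin d × Fin c, ((2 * #T) ^ #(A p.1) * n !) := by
        refine prod_le_prod (fun _ _ => Nat.zero_le _) fun p _ => ?_
        calc _ ≤ (2 * #(B p.2)) ^ #(A p.1) * n ! := by
              have := card_perm_mapsTo_mul_pow_le (A p.1) (B p.2)
                (by simpa using (Nat.mul_le_mul_left 2 (hAS p.1)).trans h)
              rw [Fintype.card_fin] at this
              -- the decidability instance on `Fin n` differs from the generic one
              convert this
          _ ≤ _ := by gcongr; exact hBT p.2
    _ = (2 * #T) ^ (c * #S) * n ! ^ (d * c) := by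
        rw [prod_mul_distrib, prod_pow_eq_pow_sum, hsum]; simp

theorem card_exists_liftMapsTo_mul_pow_le {s t : ℕ} (h : 2 * s ≤ n) :
    #{ω : Fin d × Fin c → Equiv.Perm (Fin n) |
        ∃ S ∈ powersetCard s univ, ∃ T ∈ powersetCard t univ, LiftMapsTo ω S T} * n ^ (c * s)
      ≤ (d * n).choose s * (c * n).choose t * (2 * t) ^ (c * s) * n ! ^ (d * c) := by
  calc _ ≤ (∑ S ∈ powersetCard s univ, ∑ T ∈ powersetCard t univ,
          #{ω : Fin d × Fin c → Equiv.Perm (Fin n) | LiftMapsTo ω S T}) * n ^ (c * s) := by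
        gcongr
        refine (card_le_card fun ω hω => ?_).trans
          (card_biUnion_le.trans (sum_le_sum fun S _ => card_biUnion_le))
        simpa using hω
    _ ≤ ∑ S ∈ powersetCard s univ, ∑ T ∈ powersetCard t univ,
          (2 * t) ^ (c * s) * n ! ^ (d * c) := by
        simp_rw [sum_mul]
        refine sum_le_sum fun S hS => sum_le_sum fun T hT => ?_
        rw [mem_powersetCard_univ] at hS hT
        subst hS hT
        exact card_liftMapsTo_mul_pow_le S T h
    _ = _ := by simp [mul_assoc]

theorem card_exists_liftMapsTo_mul_four_pow_le {s t : ℕ} (hd : 0 < d) (hs : 0 < s)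
    (hts : t + 2 * s ≤ c * s) (hsn : 12 * d * (6 * c) ^ c * s ≤ n) :
    #{ω : Fin d × Fin c → Equiv.Perm (Fin n) |
        ∃ S ∈ powersetCard s univ, ∃ T ∈ powersetCard t univ, LiftMapsTo ω S T} * 4 ^ s
      ≤ Fintype.card (Fin d × Fin c → Equiv.Perm (Fin n)) := by
  have hD : 2 ≤ 12 * d * (6 * c) ^ c := by
    have : 0 < (6 * c) ^ c := Nat.pos_of_ne_zero (by simp)
    nlinarith
  have h2s : 2 * s ≤ n := by nlinarith
  rw [Fintype.card_fun, Fintype.card_perm, Fintype.card_prod, Fintype.card_fin,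
    Fintype.card_fin, Fintype.card_fin]
  refine Nat.le_of_mul_le_mul_right ?_ (pow_pos (by omega) (c * s) : 0 < n ^ (c * s))
  calc _ = _ * n ^ (c * s) * 4 ^ s := by ring
    _ ≤ (d * n).choose s * (c * n).choose t * (2 * t) ^ (c * s) * n ! ^ (d * c) * 4 ^ s :=
        Nat.mul_le_mul_right _ (card_exists_liftMapsTo_mul_pow_le h2s)
    _ = ((d * n).choose s * (c * n).choose t * (2 * t) ^ (c * s) * 4 ^ s) * n ! ^ (d * c) := by
        ring
    _ ≤ n ^ (c * s) * n ! ^ (d * c) := by gcongr; exact choose_mul_choose_mul_pow_le hd hts hsn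
    _ = _ := by ring

theorem exists_liftMapsTo_of_ncard_le {ω : Fin d × Fin c → Equiv.Perm (Fin n)}
    {S : Set (Fin d × Fin n)} {t : ℕ} (ht : {y | ∃ x ∈ S, liftRel ω x y}.ncard ≤ t)
    (htn : t ≤ c * n) :
    ∃ S' ∈ powersetCard S.ncard univ, ∃ T ∈ powersetCard t univ, LiftMapsTo ω S' T := by
  obtain ⟨T, hNT, hT⟩ := Finset.exists_superset_card_eq
    (s := {y | ∃ x ∈ S, liftRel ω x y}.toFinset) (n := t)
    (by rwa [← Set.ncard_eq_toFinset_card']) (by simpa using htn)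
  refine ⟨S.toFinset, by simp [Set.ncard_eq_toFinset_card'], T, by simpa using hT,
    fun p i hpi => hNT ?_⟩
  simp only [Set.mem_toFinset] at hpi ⊢
  exact ⟨(p.1, i), hpi, rfl⟩

theorem exists_lift_expanding {ε : ℝ} (hd : 0 < d) (hε : ε < 1) (hc : 2 ≤ ε * c) (n : ℕ) :
    ∃ ω : Fin d × Fin c → Equiv.Perm (Fin n), ∀ S : Set (Fin d × Fin n), S.Nonempty →
      12 * d * (6 * c) ^ c * S.ncard ≤ n →
      (1 - ε) * c * S.ncard ≤ {y | ∃ x ∈ S, liftRel ω x y}.ncard := by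
  set D := 12 * d * (6 * c) ^ c
  have hD : 0 < D := Nat.pos_of_ne_zero (by simp [D]; omega)
  let t (s : ℕ) : ℕ := ⌊(1 - ε) * c * s⌋₊
  have hts (s : ℕ) : t s + 2 * s ≤ c * s := by
    have : (t s : ℝ) ≤ (1 - ε) * c * s := Nat.floor_le (by positivity)
    have : (t s + 2 * s : ℝ) ≤ c * s := by nlinarith
    exact_mod_cast this
  obtain ⟨ω, hω⟩ := exists_forall_notMem_of_card_mul_four_pow_le _ (n / D) Fintype.card_pos
    fun s hs => card_exists_liftMapsTo_mul_four_pow_le (t := t s) hd (mem_Icc.1 hs).1 (hts s)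
      (by rw [mul_comm]; exact (Nat.le_div_iff_mul_le hD).1 (mem_Icc.1 hs).2)
  refine ⟨ω, fun S hne hsize => ?_⟩
  by_contra! hlt
  have hsM : S.ncard ≤ n / D := (Nat.le_div_iff_mul_le hD).2 (by linarith)
  have hsn : S.ncard ≤ n := by nlinarith
  refine hω S.ncard (mem_Icc.2 ⟨(Set.ncard_pos).2 hne, hsM⟩) ?_
  simp only [mem_filter, mem_univ, true_and]
  exact exists_liftMapsTo_of_ncard_le (Nat.le_floor hlt.le)
    (by nlinarith [hts S.ncard, Nat.mul_le_mul_left c hsn])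

theorem exists_isLeftExpander_lift {ε : ℝ} (hd : 0 < d) (hε : ε < 1) (hc : 2 ≤ ε * c)
    (n : ℕ) :
    ∃ ω : Fin d × Fin c → Equiv.Perm (Fin n), IsLeftExpander (bipartiteOfRel (liftRel ω))
      (Set.range Sum.inl) ((12 * d * (6 * c) ^ c * d : ℕ) : ℝ)⁻¹ ((1 - ε) * c) := by
  obtain ⟨ω, hω⟩ := exists_lift_expanding hd hε hc n
  refine ⟨ω, isLeftExpander_bipartiteOfRel fun S hne hsize => hω S hne ?_⟩
  have hDd : 0 < 12 * d * (6 * c) ^ c * d := Nat.pos_of_ne_zero (by simp; omega)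
  rw [Nat.card_eq_fintype_card, Fintype.card_prod, Fintype.card_fin, Fintype.card_fin,
    le_inv_mul_iff₀ (by exact_mod_cast hDd)] at hsize
  have : ((12 * d * (6 * c) ^ c * S.ncard * d : ℕ) : ℝ) ≤ ((n * d : ℕ) : ℝ) := by
    push_cast at hsize ⊢; linarith
  exact Nat.le_of_mul_le_mul_right (by exact_mod_cast this) hd

end Lift

/-- **One-sided lossless expanders** (Theorem `thm:lossless-expander`).
For every ε ∈ (0,1) there is K = K(ε), and for every β ∈ (0,1/2] there is d₀ = d₀(β,ε),
such that for all d₁, d₂ ≥ d₀ that are multiples of K with 1 ≥ d₁/d₂ ≥ β/(1−β)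
there is μ > 0 such that for every N there is a finite (d₁,d₂)-biregular graph Z with
at least N vertices in which every nonempty S ⊆ L(Z) with |S| ≤ μ|L(Z)| satisfies
|N_Z(S)| ≥ (1−ε)·d₁·|S|. -/
theorem one_sided_lossless_expanders :
    ∀ ε : ℝ, 0 < ε → ε < 1 →
    ∃ K : ℕ, 0 < K ∧
      ∀ β : ℝ, 0 < β → β ≤ 1 / 2 →
      ∃ d₀ : ℕ, 0 < d₀ ∧
        ∀ d₁ d₂ : ℕ, d₀ ≤ d₁ → d₀ ≤ d₂ → K ∣ d₁ → K ∣ d₂ →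
          (d₁ : ℝ) / (d₂ : ℝ) ≤ 1 → β / (1 - β) ≤ (d₁ : ℝ) / (d₂ : ℝ) →
        ∃ μ : ℝ, 0 < μ ∧
          ∀ N : ℕ, ∃ (n : ℕ) (Z : SimpleGraph (Fin n)) (L R : Set (Fin n)),
            N ≤ n ∧ IsBiregular Z L R d₁ d₂ ∧
            ∀ S : Set (Fin n), S ⊆ L → S.Nonempty → (S.ncard : ℝ) ≤ μ * (L.ncard : ℝ) →
              (1 - ε) * (d₁ : ℝ) * (S.ncard : ℝ) ≤ ((nbrSet Z S).ncard : ℝ) := by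
  intro ε hε0 hε1
  refine ⟨1, one_pos, fun β _ _ => ⟨⌈2 / ε⌉₊, Nat.ceil_pos.2 (by positivity),
    fun d₁ d₂ hd₁ hd₂ _ _ _ _ => ?_⟩⟩
  have hd₂ : 0 < d₂ := (Nat.ceil_pos.2 (by positivity)).trans_le hd₂
  have hc : 2 ≤ ε * d₁ := by
    have := Nat.ceil_le.1 hd₁
    rwa [div_le_iff₀ hε0, mul_comm] at this
  refine ⟨((12 * d₂ * (6 * d₁) ^ d₁ * d₂ : ℕ) : ℝ)⁻¹,
    inv_pos.2 (Nat.cast_pos.2 (Nat.pos_of_ne_zero (by simp; omega))), fun N => ?_⟩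
  obtain ⟨ω, hω⟩ := exists_isLeftExpander_lift hd₂ hε1 hc N
  let e := Fintype.equivFin (Fin d₂ × Fin N ⊕ Fin d₁ × Fin N)
  refine ⟨_, _, _, _, ?_, (isBiregular_lift ω).comap_symm e, hω.comap_symm e⟩
  simp only [Fintype.card_sum, Fintype.card_prod, Fintype.card_fin]
  nlinarith

end UNE
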